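/- If f: ℝ^n → ℝ is α-strongly convex and l-smooth with 0 < α ≤ l, minimizer w*, then gradient descent w^{t+1} = w^t − (1/l)∇f(w^t) satisfies ‖w^t − w*‖₂² ≤ exp(−t·α/l)·‖w⁰ − w*‖₂² for all t ≥ 1. -/
import Mathlib


open MeasureTheory
open scoped RealInnerProductSpace

/-- Gradient descent with step size `1/l` on an `α`-strongly convex and `l`-smooth
function converges linearly: `‖w^t − w*‖² ≤ exp(−tα/l)·‖w⁰ − w*‖²` for all `t ≥ 1`. -/
theorem gradient_descent_linear_convergence (n : ℕ)
    (f : EuclideanSpace ℝ (Fin n) → ℝ) (f' : EuclideanSpace ℝ (Fin n) → EuclideanSpace ℝ (Fin n))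
    (α l : ℝ) (hα : 0 < α) (hαl : α ≤ l)
    (hgrad : ∀ x, HasGradientAt f (f' x) x)
    (hsc : ∀ x y, f x + ⟪f' x, y - x⟫ + (α / 2) * ‖y - x‖ ^ 2 ≤ f y)
    (hsm : ∀ x y, f y ≤ f x + ⟪f' x, y - x⟫ + (l / 2) * ‖y - x‖ ^ 2)
    (wstar : EuclideanSpace ℝ (Fin n)) (hmin : ∀ x, f wstar ≤ f x)
    (w : ℕ → EuclideanSpace ℝ (Fin n))
    (hstep : ∀ t : ℕ, w (t + 1) = w t - (1 / l) • f' (w t)) :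
    ∀ t : ℕ, 1 ≤ t →
      ‖w t - wstar‖ ^ 2 ≤ Real.exp (-(t : ℝ) * α / l) * ‖w 0 - wstar‖ ^ 2 := by
  have hl : 0 < l := hα.trans_le hαl
  -- contraction step
  have key : ∀ t : ℕ, ‖w (t+1) - wstar‖ ^ 2 ≤ (1 - α / l) * ‖w t - wstar‖ ^ 2 := by
    intro t
    set g := f' (w t) with hg
    set y := w t - wstar with hy
    have hdiff : w (t+1) - wstar = y - (1/l) • g := by
      rw [hstep t, hy, sub_right_comm]
    have hstep' : w (t+1) - w t = -((1/l) • g) := by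
      rw [hstep t]; abel
    have hexp : ‖w (t+1) - wstar‖ ^ 2
        = ‖y‖ ^ 2 - 2 * ((1/l) * ⟪g, y⟫) + (1/l)^2 * ‖g‖ ^ 2 := by
      rw [hdiff, norm_sub_sq_real, real_inner_smul_right, real_inner_comm, norm_smul]
      have : ‖(1:ℝ)/l‖ = 1/l := by rw [Real.norm_eq_abs]; exact abs_of_pos (by positivity)
      rw [this]; ring
    -- strong convexity at (w t, wstar)
    have hA := hsc (w t) wstar
    have hA' : f (w t) - f wstar + (α/2) * ‖y‖ ^ 2 ≤ ⟪g, y⟫ := by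
      have h1 : wstar - w t = -y := by rw [hy]; abel
      rw [h1, inner_neg_right, norm_neg] at hA
      linarith
    -- descent lemma
    have hB := hsm (w t) (w (t+1))
    have hB' : f (w (t+1)) ≤ f (w t) - (1/(2*l)) * ‖g‖ ^ 2 := by
      rw [hstep', inner_neg_right, real_inner_smul_right, real_inner_self_eq_norm_sq,
        norm_neg, norm_smul] at hB
      have : ‖(1:ℝ)/l‖ = 1/l := by rw [Real.norm_eq_abs]; exact abs_of_pos (by positivity)
      rw [this] at hB
      have hl' : l ≠ 0 := ne_of_gt hl
      calc f (w (t+1)) ≤ _ := hB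
        _ = f (w t) - (1/(2*l)) * ‖g‖ ^ 2 := by field_simp; ring
    have hC := hmin (w (t+1))
    -- combine
    have hD : (1/(2*l)) * ‖g‖ ^ 2 ≤ f (w t) - f wstar := by linarith
    have hinner : (1/(2*l)) * ‖g‖ ^ 2 + (α/2) * ‖y‖ ^ 2 ≤ ⟪g, y⟫ := by linarith
    rw [hexp]
    have hl' : l ≠ 0 := ne_of_gt hl
    have h2 : 2 * ((1/l) * ⟪g, y⟫) ≥ 2 * ((1/l) * ((1/(2*l)) * ‖g‖ ^ 2 + (α/2) * ‖y‖ ^ 2)) := by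
      have : (0:ℝ) < 1/l := by positivity
      nlinarith
    have h3 : 2 * ((1/l) * ((1/(2*l)) * ‖g‖ ^ 2 + (α/2) * ‖y‖ ^ 2))
        = (1/l)^2 * ‖g‖ ^ 2 + (α/l) * ‖y‖ ^ 2 := by field_simp
    nlinarith
  -- exponential bound by induction (holds for all t)
  have hfac : 0 ≤ 1 - α / l := by
    have : α / l ≤ 1 := (div_le_one hl).mpr hαl
    linarith
  have hfe : 1 - α / l ≤ Real.exp (-(α / l)) := by
    have := Real.add_one_le_exp (-(α/l))
    linarith
  have main : ∀ t : ℕ, ‖w t - wstar‖ ^ 2 ≤ Real.exp (-(t : ℝ) * α / l) * ‖w 0 - wstar‖ ^ 2 := by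
    intro t
    induction t with
    | zero => simp
    | succ t ih =>
      calc ‖w (t+1) - wstar‖ ^ 2 ≤ (1 - α / l) * ‖w t - wstar‖ ^ 2 := key t
        _ ≤ (1 - α / l) * (Real.exp (-(t : ℝ) * α / l) * ‖w 0 - wstar‖ ^ 2) :=
            mul_le_mul_of_nonneg_left ih hfac
        _ ≤ Real.exp (-(α/l)) * (Real.exp (-(t : ℝ) * α / l) * ‖w 0 - wstar‖ ^ 2) := by
            apply mul_le_mul_of_nonneg_right hfe; positivity
        _ = Real.exp (-((t:ℝ)+1) * α / l) * ‖w 0 - wstar‖ ^ 2 := by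
            rw [← mul_assoc, ← Real.exp_add]; ring_nf
        _ = Real.exp (-(((t:ℕ)+1 : ℕ) : ℝ) * α / l) * ‖w 0 - wstar‖ ^ 2 := by push_cast; ring_nf
  intro t _
  exact main t
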